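/- If u : ℝ → ℂ^N is differentiable and satisfies i u'(t) = K u(t) - γ (ū∘u)∘u + V u(t) with K Hermitian and V real diagonal, then the total energy H(u) = uᴴ K u - (γ/2) Σ_k |u_k|⁴ + uᴴ V u is constant in t. -/

import Mathlib

/-!
Along a solution, every quadratic or quartic term of `H` has derivative of the form `z + z̄`,
with `z` the pairing of `u̇` with the corresponding term of the right-hand side (for the
quadratic forms this uses that `K` and `V` are Hermitian). Hence `Ḣ = z + z̄` with
`z = u̇ᴴ (K u - γ (ū∘u)∘u + V u) = u̇ᴴ (i u̇) = i ‖u̇‖²`, which is purely imaginary, so `Ḣ = 0`.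
-/

open Matrix

variable {ι : Type*} [Fintype ι] {u w : ℝ → ι → ℂ} {u' w' : ι → ℂ} {t : ℝ}

theorem HasDerivAt.star_dotProduct (hu : HasDerivAt u u' t) (hw : HasDerivAt w w' t) :
    HasDerivAt (fun s => star (u s) ⬝ᵥ w s) (star u' ⬝ᵥ w t + star (u t) ⬝ᵥ w') t := by
  simp only [dotProduct, Pi.star_apply, ← Finset.sum_add_distrib]
  refine HasDerivAt.fun_sum fun k _ => ?_
  exact (hasDerivAt_pi.mp hu k).star.mul (hasDerivAt_pi.mp hw k)

theorem HasDerivAt.matrix_mulVec (A : Matrix ι ι ℂ) (hu : HasDerivAt u u' t) :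
    HasDerivAt (fun s => A *ᵥ u s) (A *ᵥ u') t :=
  hasDerivAt_pi.mpr fun i =>
    HasDerivAt.fun_sum fun j _ => (hasDerivAt_pi.mp hu j).const_mul (A i j)

theorem Matrix.IsHermitian.star_dotProduct_mulVec {A : Matrix ι ι ℂ} (hA : A.IsHermitian)
    (x y : ι → ℂ) : star x ⬝ᵥ A *ᵥ y = star (star y ⬝ᵥ A *ᵥ x) := by
  rw [Matrix.star_dotProduct, star_mulVec, ← dotProduct_mulVec, hA.eq]

theorem HasDerivAt.star_dotProduct_mulVec {A : Matrix ι ι ℂ} (hA : A.IsHermitian)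
    (hu : HasDerivAt u u' t) :
    HasDerivAt (fun s => star (u s) ⬝ᵥ A *ᵥ u s)
      (star u' ⬝ᵥ A *ᵥ u t + star (star u' ⬝ᵥ A *ᵥ u t)) t := by
  simpa only [hA.star_dotProduct_mulVec (u t)] using hu.star_dotProduct (hu.matrix_mulVec A)

theorem HasDerivAt.sum_norm_pow_four (hu : HasDerivAt u u' t) :
    HasDerivAt (fun s => ∑ k, (‖u s k‖ ^ 4 : ℂ))
      (2 * (star u' ⬝ᵥ (fun k => starRingEnd ℂ (u t k) * u t k * u t k)
        + star (star u' ⬝ᵥ (fun k => starRingEnd ℂ (u t k) * u t k * u t k)))) t := by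
  have hsq : ∀ z : ℂ, (‖z‖ ^ 4 : ℂ) = starRingEnd ℂ z * z * (starRingEnd ℂ z * z) := fun z => by
    rw [Complex.conj_mul', ← pow_add]
  have hterm : ∀ k,
      HasDerivAt (fun s => starRingEnd ℂ (u s k) * u s k * (starRingEnd ℂ (u s k) * u s k))
      (2 * (star (u' k) * (starRingEnd ℂ (u t k) * u t k * u t k)
        + star (star (u' k) * (starRingEnd ℂ (u t k) * u t k * u t k)))) t := fun k => by
    have huk := hasDerivAt_pi.mp hu k
    have hq : HasDerivAt (fun s => starRingEnd ℂ (u s k) * u s k)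
        (starRingEnd ℂ (u' k) * u t k + starRingEnd ℂ (u t k) * u' k) t :=
      huk.star.mul huk
    refine (hq.mul hq).congr_deriv ?_
    simp only [RCLike.star_def, map_mul, Complex.conj_conj]
    ring
  simp only [hsq, dotProduct, Pi.star_apply, star_sum, Finset.mul_sum, ← Finset.sum_add_distrib]
  exact HasDerivAt.fun_sum fun k _ => hterm k

omit [Fintype ι] in
theorem Matrix.IsDiag.isHermitian_map_ofReal {V : Matrix ι ι ℝ} (hV : V.IsDiag) :
    (V.map Complex.ofReal).IsHermitian :=
  IsHermitian.map (A := V) hV.isSymm _ fun _ => (Complex.conj_ofReal _).symm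

theorem star_dotProduct_I_smul_add_star (v : ι → ℂ) :
    star v ⬝ᵥ (Complex.I • v) + star (star v ⬝ᵥ (Complex.I • v)) = 0 := by
  rw [dotProduct_smul, star_smul, ← star_dotProduct_star, star_star, smul_eq_mul, smul_eq_mul,
    Complex.star_def, Complex.conj_I]
  ring

/-- For the discretized nonlinear Schrödinger equation
`i u' = K u - γ (ū∘u)∘u + V u` with `K` Hermitian and `V` real diagonal,
the total energy `H(u) = uᴴKu - (γ/2) Σ_k |u_k|⁴ + uᴴVu` is conserved. -/
theorem stmt_8 {N : ℕ} (u : ℝ → Fin N → ℂ) (hu : Differentiable ℝ u)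
    (K : Matrix (Fin N) (Fin N) ℂ) (hK : K.IsHermitian)
    (V : Matrix (Fin N) (Fin N) ℝ) (hV : V.IsDiag) (γ : ℝ)
    (hode : ∀ t : ℝ, Complex.I • deriv u t =
      K.mulVec (u t)
        - γ • (fun k => starRingEnd ℂ (u t k) * u t k * u t k)
        + (V.map Complex.ofReal).mulVec (u t)) :
    let H : ℝ → ℂ := fun t =>
      star (u t) ⬝ᵥ K.mulVec (u t)
        - (γ / 2 : ℂ) * ∑ k, (‖u t k‖ ^ 4 : ℂ)
        + star (u t) ⬝ᵥ (V.map Complex.ofReal).mulVec (u t)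
    ∀ s t : ℝ, H s = H t := by
  intro H s t
  have hH : ∀ r, HasDerivAt H 0 r := fun r => by
    have hv : HasDerivAt u (deriv u r) r := (hu r).hasDerivAt
    refine (((hv.star_dotProduct_mulVec hK).sub (hv.sum_norm_pow_four.const_mul (γ / 2 : ℂ))).add
      (hv.star_dotProduct_mulVec hV.isHermitian_map_ofReal)).congr_deriv ?_
    have himag := star_dotProduct_I_smul_add_star (deriv u r)
    rw [hode r, dotProduct_add, dotProduct_sub, dotProduct_smul, star_add, star_sub, star_smul,
      Complex.real_smul, Complex.real_smul, star_trivial γ] at himag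
    linear_combination himag
  exact is_const_of_deriv_eq_zero (fun r => (hH r).differentiableAt) (fun r => (hH r).deriv) s t
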